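/- Consistency theorem for Riesz means (Hardy–Riesz, Theorem 16, used to prove Theorem 1): Let (λ_n)_{n∈ℕ} be a strictly increasing sequence of positive real numbers tending to infinity, let (a_n)_{n∈ℕ} be complex numbers, and let κ ≥ 0. If the series ∑ a_n is Riesz summable with parameters ((λ_n), κ) to the sum A, then for every κ' ≥ κ it is Riesz summable with parameters ((λ_n), κ') to the same sum A. -/

import Mathlib

/-!
Write `C_κ(ω)` for the Riesz mean of order `κ`. For `δ > 0` and `ω > 0`, expanding both sides
and using `∫_s^1 (x - s)^κ (1 - x)^(δ-1) dx = (1 - s)^(κ+δ) B(κ+1, δ)` gives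
`B(κ+1, δ) C_{κ+δ}(ω) = ∫_0^1 x^κ (1 - x)^(δ-1) C_κ(ωx) dx`.
A convergent `C_κ` is bounded (it vanishes for `ω ≤ 0` and is a finite sum with coefficients in
`[0, 1]` on bounded ranges), and `C_κ(ωx) → A` for every `x ∈ (0, 1]`, so dominated convergence
gives `C_{κ+δ}(ω) → A`.
-/

open Filter Topology

/-- The Riesz mean of order `κ` of a series `∑ a n` with exponents `l n`, at the
point `ω`: `∑_{n : l n < ω} (1 - l n / ω)^κ • a n`. -/
noncomputable def rieszMean (l : ℕ → ℝ) (a : ℕ → ℂ) (κ : ℝ) (ω : ℝ) : ℂ :=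
  ∑ᶠ n ∈ {n | l n < ω}, ((1 - l n / ω) ^ κ : ℝ) • a n

/-- The series `∑ a n` is Riesz summable with parameters `(l, κ)` to `A` if its
Riesz means of order `κ` converge to `A` as `ω → ∞`. -/
def RieszSummableTo (l : ℕ → ℝ) (a : ℕ → ℂ) (κ : ℝ) (A : ℂ) : Prop :=
  Tendsto (rieszMean l a κ) atTop (𝓝 A)

open MeasureTheory Set intervalIntegral
open scoped Interval

section BetaIntegral

/-- The Euler beta value `B(κ + 1, δ)`. -/
noncomputable def rieszBeta (κ δ : ℝ) : ℝ := ∫ x in (0 : ℝ)..1, x ^ κ * (1 - x) ^ (δ - 1)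

variable {κ δ : ℝ}

lemma intervalIntegrable_sub_rpow_mul_sub_rpow (hκ : 0 ≤ κ) (hδ : 0 < δ) (s b : ℝ) :
    IntervalIntegrable (fun x => (x - s) ^ κ * (b - x) ^ (δ - 1)) volume s b := by
  have hright : IntervalIntegrable (fun x : ℝ => (b - x) ^ (δ - 1)) volume s b := by
    simpa using (intervalIntegrable_rpow' (r := δ - 1) (by linarith)
      (a := b - s) (b := b - b)).comp_sub_left b
  have hleft : ContinuousOn (fun x : ℝ => (x - s) ^ κ) (uIcc s b) :=
    ContinuousOn.rpow_const (by fun_prop) fun _ _ => Or.inr hκ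
  exact hright.continuousOn_mul hleft

lemma rieszBeta_pos (hκ : 0 ≤ κ) (hδ : 0 < δ) : 0 < rieszBeta κ δ := by
  refine intervalIntegral_pos_of_pos_on ?_ (fun x hx => ?_) one_pos
  · simpa using intervalIntegrable_sub_rpow_mul_sub_rpow hκ hδ 0 1
  · have hx₀ : 0 < x := hx.1
    have hx₁ : 0 < 1 - x := by linarith [hx.2]
    positivity

lemma integral_sub_rpow_mul_sub_rpow {s b : ℝ} (hsb : s < b) :
    ∫ x in s..b, (x - s) ^ κ * (b - x) ^ (δ - 1) = (b - s) ^ (κ + δ) * rieszBeta κ δ := by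
  have hc : 0 < b - s := sub_pos.mpr hsb
  have hsubst := smul_integral_comp_add_mul (a := 0) (b := 1)
    (fun x => (x - s) ^ κ * (b - x) ^ (δ - 1)) (b - s) s
  simp only [mul_zero, add_zero, mul_one, add_sub_cancel, smul_eq_mul] at hsubst
  rw [← hsubst, rieszBeta, show κ + δ = 1 + (κ + (δ - 1)) by ring, Real.rpow_add hc,
    Real.rpow_one, mul_assoc]
  congr 1
  rw [← intervalIntegral.integral_const_mul]
  refine intervalIntegral.integral_congr fun u hu => ?_
  rw [uIcc_of_le zero_le_one] at hu
  rw [add_sub_cancel_left, show b - (s + (b - s) * u) = (b - s) * (1 - u) by ring,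
    Real.mul_rpow hc.le hu.1, Real.mul_rpow hc.le (by linarith [hu.2]), Real.rpow_add hc]
  ring

end BetaIntegral

lemma integral_indicator_Ioi {E : Type*} [NormedAddCommGroup E] [NormedSpace ℝ E]
    {f : ℝ → E} {a s b : ℝ} (has : a ≤ s) (hsb : s ≤ b) :
    ∫ x in a..b, (Ioi s).indicator f x = ∫ x in s..b, f x := by
  rw [integral_of_le (has.trans hsb), integral_of_le hsb, setIntegral_indicator measurableSet_Ioi,
    Ioc_inter_Ioi, max_eq_right has]

lemma IntervalIntegrable.indicator_Ioi {E : Type*} [NormedAddCommGroup E]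
    {f : ℝ → E} {a s b : ℝ} (hf : IntervalIntegrable f volume s b) (has : a ≤ s) (hsb : s ≤ b) :
    IntervalIntegrable ((Ioi s).indicator f) volume a b := by
  rw [intervalIntegrable_iff_integrableOn_Ioc_of_le (has.trans hsb), IntegrableOn,
    integrable_indicator_iff measurableSet_Ioi, IntegrableOn,
    Measure.restrict_restrict measurableSet_Ioi, inter_comm, Ioc_inter_Ioi, max_eq_right has]
  exact (intervalIntegrable_iff_integrableOn_Ioc_of_le hsb).mp hf

lemma rpow_mul_one_sub_div_rpow {x y p : ℝ} (hx : 0 < x) (hyx : y ≤ x) :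
    x ^ p * (1 - y / x) ^ p = (x - y) ^ p := by
  rw [← Real.mul_rpow hx.le (sub_nonneg.mpr ((div_le_one hx).mpr hyx)), mul_one_sub,
    mul_div_cancel₀ _ hx.ne']

section RieszMean

variable {l : ℕ → ℝ} {a : ℕ → ℂ} {κ : ℝ}

lemma finite_setOf_lt_of_tendsto_atTop (htop : Tendsto l atTop atTop) (ω : ℝ) :
    {n | l n < ω}.Finite := by
  have := htop.eventually_ge_atTop ω
  rw [← Nat.cofinite_eq_atTop, eventually_cofinite] at this
  simpa using this

lemma rieszMean_eq_sum {t : ℝ} {F : Finset ℕ} (hF : {n | l n < t} ⊆ F) :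
    rieszMean l a κ t = ∑ n ∈ F, (if l n < t then (1 - l n / t) ^ κ else 0 : ℝ) • a n := by
  rw [rieszMean, finsum_mem_def,
    finsum_eq_sum_of_support_subset _ fun n hn => hF (mem_of_indicator_ne_zero hn)]
  refine Finset.sum_congr rfl fun n _ => ?_
  simp [indicator_apply, ite_smul]

lemma norm_rieszMean_le_sum (hpos : ∀ n, 0 < l n) (hκ : 0 ≤ κ) {t : ℝ} {F : Finset ℕ}
    (hF : {n | l n < t} ⊆ F) : ‖rieszMean l a κ t‖ ≤ ∑ n ∈ F, ‖a n‖ := by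
  rw [rieszMean_eq_sum hF]
  refine (norm_sum_le _ _).trans (Finset.sum_le_sum fun n _ => ?_)
  split_ifs with hlt
  · have ht : 0 < t := (hpos n).trans hlt
    have hle : l n / t ≤ 1 := (div_le_one ht).mpr hlt.le
    have hweight : (1 - l n / t) ^ κ ≤ 1 :=
      Real.rpow_le_one (by linarith) (by linarith [div_pos (hpos n) ht]) hκ
    rw [norm_smul, Real.norm_of_nonneg (Real.rpow_nonneg (by linarith) _)]
    exact mul_le_of_le_one_left (norm_nonneg _) hweight
  · simp

lemma measurable_rieszMean (htop : Tendsto l atTop atTop) : Measurable (rieszMean l a κ) := by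
  refine measurable_of_tendsto_metrizable (f := fun N t => ∑ n ∈ Finset.range N,
    (if l n < t then (1 - l n / t) ^ κ else 0 : ℝ) • a n) (fun N => ?_) ?_
  · refine Finset.measurable_sum _ fun n _ => Measurable.smul_const ?_ _
    exact Measurable.ite measurableSet_Ioi (by fun_prop) measurable_const
  · refine tendsto_pi_nhds.mpr fun t => ?_
    obtain ⟨N₀, hN₀⟩ := (htop.eventually_ge_atTop t).exists_forall_of_atTop
    refine tendsto_atTop_of_eventually_const (i₀ := N₀) fun N hN => (rieszMean_eq_sum ?_).symm
    exact fun n hn => Finset.mem_range.mpr <|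
      lt_of_not_ge fun hNn => (hN₀ n (hN.trans hNn)).not_gt hn

lemma RieszSummableTo.exists_norm_rieszMean_le (hpos : ∀ n, 0 < l n)
    (htop : Tendsto l atTop atTop) (hκ : 0 ≤ κ) {A : ℂ} (h : RieszSummableTo l a κ A) :
    ∃ M, ∀ t, ‖rieszMean l a κ t‖ ≤ M := by
  obtain ⟨T, hT⟩ := (h.norm.eventually (gt_mem_nhds (lt_add_one ‖A‖))).exists_forall_of_atTop
  set F := (finite_setOf_lt_of_tendsto_atTop htop T).toFinset
  refine ⟨max (‖A‖ + 1) (∑ n ∈ F, ‖a n‖), fun t => ?_⟩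
  rcases le_or_gt T t with hTt | htT
  · exact le_max_of_le_left (hT t hTt).le
  · refine le_max_of_le_right (norm_rieszMean_le_sum hpos hκ fun n hn => ?_)
    simpa [F] using hn.trans htT

lemma rieszBeta_smul_rieszMean_add (hpos : ∀ n, 0 < l n) (htop : Tendsto l atTop atTop)
    (hκ : 0 ≤ κ) {δ : ℝ} (hδ : 0 < δ) {ω : ℝ} (hω : 0 < ω) :
    rieszBeta κ δ • rieszMean l a (κ + δ) ω
      = ∫ x in (0 : ℝ)..1, (x ^ κ * (1 - x) ^ (δ - 1)) • rieszMean l a κ (ω * x) := by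
  set F := (finite_setOf_lt_of_tendsto_atTop htop ω).toFinset
  have hF : ∀ n, n ∈ F ↔ l n < ω := fun n => Finite.mem_toFinset _
  set g : ℕ → ℝ → ℝ := fun n =>
    (Ioi (l n / ω)).indicator fun x => (x - l n / ω) ^ κ * (1 - x) ^ (δ - 1)
  have hs : ∀ n ∈ F, 0 ≤ l n / ω ∧ l n / ω < 1 := fun n hn =>
    ⟨div_nonneg (hpos n).le hω.le, (div_lt_one hω).mpr ((hF n).mp hn)⟩
  have hg_int : ∀ n ∈ F, IntervalIntegrable (fun x => g n x • a n) volume 0 1 := fun n hn =>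
    have hg : IntervalIntegrable (g n) volume 0 1 :=
      (intervalIntegrable_sub_rpow_mul_sub_rpow hκ hδ _ 1).indicator_Ioi (hs n hn).1 (hs n hn).2.le
    ⟨hg.1.smul_const (a n), hg.2.smul_const (a n)⟩
  have hpointwise : ∀ᵐ x, x ∈ Ι (0 : ℝ) 1 →
      (x ^ κ * (1 - x) ^ (δ - 1)) • rieszMean l a κ (ω * x) = ∑ n ∈ F, g n x • a n := by
    refine ae_of_all _ fun x hx => ?_
    rw [uIoc_of_le zero_le_one] at hx
    have hωx : ω * x ≤ ω := mul_le_of_le_one_right hω.le hx.2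
    rw [rieszMean_eq_sum fun n hn => (hF n).mpr (lt_of_lt_of_le hn hωx), Finset.smul_sum]
    refine Finset.sum_congr rfl fun n _ => ?_
    rw [smul_smul]
    congr 1
    simp only [g]
    by_cases hlt : l n < ω * x
    · have hlt' : l n / ω < x := (div_lt_iff₀' hω).mpr hlt
      rw [if_pos hlt, indicator_of_mem (mem_Ioi.mpr hlt'), ← div_div,
        ← rpow_mul_one_sub_div_rpow hx.1 hlt'.le]
      ring
    · have hnot : x ∉ Ioi (l n / ω) := fun h => hlt ((div_lt_iff₀' hω).mp (mem_Ioi.mp h))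
      rw [if_neg hlt, indicator_of_notMem hnot, mul_zero]
  rw [integral_congr_ae hpointwise, integral_finsetSum hg_int,
    rieszMean_eq_sum fun n hn => (hF n).mpr hn, Finset.smul_sum]
  refine Finset.sum_congr rfl fun n hn => ?_
  rw [intervalIntegral.integral_smul_const, integral_indicator_Ioi (hs n hn).1 (hs n hn).2.le,
    integral_sub_rpow_mul_sub_rpow (hs n hn).2, if_pos ((hF n).mp hn), smul_smul, mul_comm]

end RieszMean

theorem RieszSummableTo.add_order {l : ℕ → ℝ} {a : ℕ → ℂ} {κ δ : ℝ} {A : ℂ}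
    (hpos : ∀ n, 0 < l n) (htop : Tendsto l atTop atTop) (hκ : 0 ≤ κ) (hδ : 0 < δ)
    (h : RieszSummableTo l a κ A) : RieszSummableTo l a (κ + δ) A := by
  obtain ⟨M, hM⟩ := h.exists_norm_rieszMean_le hpos htop hκ
  let k : ℝ → ℝ := fun x => x ^ κ * (1 - x) ^ (δ - 1)
  have hk_int : IntervalIntegrable k volume 0 1 := by
    simpa using intervalIntegrable_sub_rpow_mul_sub_rpow hκ hδ 0 1
  have hlim : Tendsto (fun ω => ∫ x in (0 : ℝ)..1, k x • rieszMean l a κ (ω * x)) atTop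
      (𝓝 (∫ x in (0 : ℝ)..1, k x • A)) := by
    refine intervalIntegral.tendsto_integral_filter_of_dominated_convergence (fun x => k x * M)
      (Eventually.of_forall fun ω => ?_) (Eventually.of_forall fun ω => ae_of_all _ fun x hx => ?_)
      (hk_int.mul_const M) (ae_of_all _ fun x hx => ?_)
    · exact (Measurable.smul (f := k) (by fun_prop)
        ((measurable_rieszMean htop).comp (measurable_const_mul ω))).aestronglyMeasurable
    · rw [uIoc_of_le zero_le_one] at hx
      have hk : 0 ≤ k x :=
        mul_nonneg (Real.rpow_nonneg hx.1.le _) (Real.rpow_nonneg (by linarith [hx.2]) _)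
      rw [norm_smul, Real.norm_of_nonneg hk]
      exact mul_le_mul_of_nonneg_left (hM _) hk
    · rw [uIoc_of_le zero_le_one] at hx
      exact (h.comp (tendsto_id.atTop_mul_const hx.1)).const_smul (k x)
  rw [intervalIntegral.integral_smul_const] at hlim
  rw [RieszSummableTo, ← tendsto_const_smul_iff₀ (rieszBeta_pos hκ hδ).ne']
  refine hlim.congr' ?_
  filter_upwards [eventually_gt_atTop 0] with ω hω
  exact (rieszBeta_smul_rieszMean_add hpos htop hκ hδ hω).symm

theorem riesz_consistency_general (l : ℕ → ℝ)
    (hpos : ∀ n, 0 < l n) (htop : Tendsto l atTop atTop)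
    (a : ℕ → ℂ) (κ κ' : ℝ) (hκ : 0 ≤ κ) (hκκ' : κ ≤ κ') (A : ℂ)
    (h : RieszSummableTo l a κ A) :
    RieszSummableTo l a κ' A := by
  rcases hκκ'.eq_or_lt with rfl | hlt
  · exact h
  · simpa using h.add_order hpos htop hκ (sub_pos.mpr hlt)

/-- Consistency theorem for Riesz means (Hardy–Riesz, Theorem 16): if `∑ a n` is
Riesz summable with parameters `(l, κ)` to `A`, then it is Riesz summable with
parameters `(l, κ')` to `A` for every `κ' ≥ κ`. -/
theorem riesz_consistency (l : ℕ → ℝ) (hmono : StrictMono l)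
    (hpos : ∀ n, 0 < l n) (htop : Tendsto l atTop atTop)
    (a : ℕ → ℂ) (κ κ' : ℝ) (hκ : 0 ≤ κ) (hκκ' : κ ≤ κ') (A : ℂ)
    (h : RieszSummableTo l a κ A) :
    RieszSummableTo l a κ' A :=
  riesz_consistency_general l hpos htop a κ κ' hκ hκκ' A h
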